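/- Let F(y) := |y| + ⟨b, y⟩ be a Minkowski–Randers metric on ℝ³ with constant vector b, |b| < 1, and let φ(s) := 1 + s so that F(y) = |y|·φ(⟨b,y⟩/|y|). The 2-harmonic symmetrization of F is F_sym(y) = |y|·φ_sym(⟨b,y⟩/|y|) with φ_sym(s) = (1−s²)/√(1+s²), and the quantity φ_sym(s) − s·φ_sym'(s) + (|b|²−s²)·φ_sym''(s) equals (1 − 3|b|² + (7+3|b|²)s²)/(1+s²)^(5/2); in particular it is positive for all |s| ≤ |b| if and only if |b| < 1/√3. -/

import Mathlib

open RealInnerProductSpace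

/-- The Minkowski–Randers metric `F(y) = |y| + ⟨b,y⟩` on `ℝ³`. -/
noncomputable def randersF (b y : EuclideanSpace ℝ (Fin 3)) : ℝ := ‖y‖ + ⟪b, y⟫

/-- The `2`-harmonic symmetrization of the Randers metric. -/
noncomputable def randersFsym (b y : EuclideanSpace ℝ (Fin 3)) : ℝ :=
  Real.sqrt (2 / ((randersF b y ^ 2)⁻¹ + (randersF b (-y) ^ 2)⁻¹))

/-- `φ_sym(s) = (1−s²)/√(1+s²)`, the symmetrization of `φ(s) = 1+s` for `m = 2`. -/
noncomputable def phiSym (s : ℝ) : ℝ := (1 - s ^ 2) / Real.sqrt (1 + s ^ 2)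

/-! With `s = ⟨b,y⟩/|y|` one has `F(±y) = |y|(1 ± s)`, and `√2 (a⁻² + c⁻²)^(-1/2)` is positively
homogeneous in `(a, c)`, so `F_sym(y) = |y| φ_sym(s)`; since `|s| ≤ |b| < 1`, the expression
`√2 ((1+s)⁻² + (1-s)⁻²)^(-1/2)` simplifies to `(1-s²)/√(1+s²)`.
Differentiating, `φ_sym' = -s(3+s²)/(1+s²)^(3/2)` and `φ_sym'' = 3(s²-1)/(1+s²)^(5/2)`, which gives
the Chern–Shen quantity. Its numerator is increasing in `s²`, so it is positive on `|s| ≤ |b|`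
iff it is positive at `s = 0`, i.e. iff `3|b|² < 1`. -/

noncomputable def harmonicSym (a c : ℝ) : ℝ := √(2 / ((a ^ 2)⁻¹ + (c ^ 2)⁻¹))

lemma harmonicSym_mul {r : ℝ} (hr : 0 ≤ r) (a c : ℝ) :
    harmonicSym (r * a) (r * c) = r * harmonicSym a c := by
  have h : 2 / (((r * a) ^ 2)⁻¹ + ((r * c) ^ 2)⁻¹) = r ^ 2 * (2 / ((a ^ 2)⁻¹ + (c ^ 2)⁻¹)) := by
    rw [mul_pow, mul_pow, mul_inv, mul_inv, ← mul_add, div_mul_eq_div_div, div_inv_eq_mul,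
      mul_comm, mul_div_assoc]
  rw [harmonicSym, harmonicSym, h, Real.sqrt_mul (by positivity), Real.sqrt_sq hr]

lemma phiSym_eq_harmonicSym {s : ℝ} (hs : |s| < 1) : phiSym s = harmonicSym (1 + s) (1 - s) := by
  obtain ⟨hs₁, hs₂⟩ := abs_lt.1 hs
  have h : 2 / (((1 + s) ^ 2)⁻¹ + ((1 - s) ^ 2)⁻¹) = (1 - s ^ 2) ^ 2 / (1 + s ^ 2) := by
    have : 1 + s ≠ 0 := by linarith
    have : 1 - s ≠ 0 := by linarith
    field_simp
    ring
  have hpos : 0 ≤ 1 - s ^ 2 := by nlinarith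
  rw [harmonicSym, h, Real.sqrt_div' _ (by positivity), Real.sqrt_sq hpos, phiSym]

lemma hasDerivAt_sqrt_one_add_sq (s : ℝ) :
    HasDerivAt (fun s : ℝ => √(1 + s ^ 2)) (s / √(1 + s ^ 2)) s := by
  refine (((hasDerivAt_pow 2 s).const_add 1).sqrt (by positivity)).congr_deriv ?_
  field_simp
  ring

lemma hasDerivAt_phiSym (s : ℝ) :
    HasDerivAt phiSym (-s * (3 + s ^ 2) / √(1 + s ^ 2) ^ 3) s := by
  have ht : √(1 + s ^ 2) ^ 2 = 1 + s ^ 2 := Real.sq_sqrt (by positivity)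
  refine (((hasDerivAt_pow 2 s).const_sub 1).div (hasDerivAt_sqrt_one_add_sq s)
    (by positivity)).congr_deriv ?_
  field_simp
  linear_combination (-2 * s) * ht

lemma deriv_phiSym : deriv phiSym = fun s => -s * (3 + s ^ 2) / √(1 + s ^ 2) ^ 3 :=
  funext fun s => (hasDerivAt_phiSym s).deriv

lemma hasDerivAt_deriv_phiSym (s : ℝ) :
    HasDerivAt (deriv phiSym) (3 * (s ^ 2 - 1) / √(1 + s ^ 2) ^ 5) s := by
  have ht : √(1 + s ^ 2) ^ 2 = 1 + s ^ 2 := Real.sq_sqrt (by positivity)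
  have hnum : HasDerivAt (fun s : ℝ => -s * (3 + s ^ 2)) (-1 * (3 + s ^ 2) + -s * (2 * s)) s :=
    (hasDerivAt_id' s).neg.mul (by simpa using (hasDerivAt_pow 2 s).const_add 3)
  rw [deriv_phiSym]
  refine (hnum.div ((hasDerivAt_sqrt_one_add_sq s).fun_pow 3)
    (pow_ne_zero _ (by positivity))).congr_deriv ?_
  field_simp
  linear_combination (-3 * (1 + s ^ 2) * √(1 + s ^ 2) ^ 2) * ht

lemma deriv_deriv_phiSym :
    deriv (deriv phiSym) = fun s => 3 * (s ^ 2 - 1) / √(1 + s ^ 2) ^ 5 :=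
  funext fun s => (hasDerivAt_deriv_phiSym s).deriv

lemma phiSym_chernShen (B s : ℝ) :
    phiSym s - s * deriv phiSym s + (B - s ^ 2) * deriv (deriv phiSym) s =
      (1 - 3 * B + (7 + 3 * B) * s ^ 2) / (1 + s ^ 2) ^ ((5 : ℝ) / 2) := by
  have ht : √(1 + s ^ 2) ^ 2 = 1 + s ^ 2 := Real.sq_sqrt (by positivity)
  have h52 : (1 + s ^ 2) ^ ((5 : ℝ) / 2) = √(1 + s ^ 2) ^ 5 := by
    rw [Real.sqrt_eq_rpow, ← Real.rpow_mul_natCast (by positivity)]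
    norm_num
  rw [deriv_deriv_phiSym, deriv_phiSym, h52, phiSym]
  field_simp
  linear_combination (1 + 3 * s ^ 2 + (1 - s ^ 2) * √(1 + s ^ 2) ^ 2) * ht

lemma chernShen_pos_iff {c : ℝ} (hc : 0 ≤ c) :
    (∀ s : ℝ, |s| ≤ c →
        0 < (1 - 3 * c ^ 2 + (7 + 3 * c ^ 2) * s ^ 2) / (1 + s ^ 2) ^ ((5 : ℝ) / 2)) ↔
      c < 1 / √3 := by
  have hc3 : c < 1 / √3 ↔ 0 < 1 - 3 * c ^ 2 := by
    rw [one_div, ← Real.sqrt_inv, Real.lt_sqrt hc]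
    constructor <;> intro <;> linarith
  have hD (s : ℝ) : 0 < (1 + s ^ 2) ^ ((5 : ℝ) / 2) := by positivity
  simp only [div_pos_iff_of_pos_right (hD _), hc3]
  exact ⟨fun h => by simpa using h 0 (by simpa using hc), fun h s _ => by positivity⟩

lemma randersFsym_eq_harmonicSym (b y : EuclideanSpace ℝ (Fin 3)) :
    randersFsym b y = harmonicSym (randersF b y) (randersF b (-y)) := rfl

lemma randersF_eq_norm_mul {y : EuclideanSpace ℝ (Fin 3)} (b : EuclideanSpace ℝ (Fin 3))
    (hy : y ≠ 0) : randersF b y = ‖y‖ * (1 + ⟪b, y⟫ / ‖y‖) := by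
  rw [randersF, mul_add, mul_one, mul_div_cancel₀ _ (norm_ne_zero_iff.2 hy)]

lemma randersF_neg_eq_norm_mul {y : EuclideanSpace ℝ (Fin 3)} (b : EuclideanSpace ℝ (Fin 3))
    (hy : y ≠ 0) : randersF b (-y) = ‖y‖ * (1 - ⟪b, y⟫ / ‖y‖) := by
  rw [randersF, norm_neg, inner_neg_right, mul_sub, mul_one,
    mul_div_cancel₀ _ (norm_ne_zero_iff.2 hy), sub_eq_add_neg]

lemma abs_inner_div_norm_lt_one {b y : EuclideanSpace ℝ (Fin 3)} (hb : ‖b‖ < 1) (hy : y ≠ 0) :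
    |⟪b, y⟫ / ‖y‖| < 1 := by
  have hy' : 0 < ‖y‖ := norm_pos_iff.2 hy
  rw [abs_div, abs_norm, div_lt_one hy']
  calc |⟪b, y⟫| ≤ ‖b‖ * ‖y‖ := abs_real_inner_le_norm b y
    _ < 1 * ‖y‖ := by gcongr
    _ = ‖y‖ := one_mul _

/-- For the Minkowski–Randers metric `F(y) = |y| + ⟨b,y⟩` on `ℝ³` with `|b| < 1`:
its `2`-harmonic symmetrization is `F_sym(y) = |y|·φ_sym(⟨b,y⟩/|y|)` with
`φ_sym(s) = (1−s²)/√(1+s²)`; the Chern–Shen ellipticity quantity equals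
`(1 − 3|b|² + (7+3|b|²)s²)/(1+s²)^(5/2)`; and it is positive for all `|s| ≤ |b|`
if and only if `|b| < 1/√3`. -/
theorem randers_symmetrization (b : EuclideanSpace ℝ (Fin 3)) (hb : ‖b‖ < 1) :
    (∀ y : EuclideanSpace ℝ (Fin 3), y ≠ 0 →
      randersFsym b y = ‖y‖ * phiSym (⟪b, y⟫ / ‖y‖)) ∧
    (∀ s : ℝ,
      phiSym s - s * deriv phiSym s + (‖b‖ ^ 2 - s ^ 2) * deriv (deriv phiSym) s =
        (1 - 3 * ‖b‖ ^ 2 + (7 + 3 * ‖b‖ ^ 2) * s ^ 2) / (1 + s ^ 2) ^ ((5 : ℝ) / 2)) ∧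
    ((∀ s : ℝ, |s| ≤ ‖b‖ →
        0 < phiSym s - s * deriv phiSym s + (‖b‖ ^ 2 - s ^ 2) * deriv (deriv phiSym) s) ↔
      ‖b‖ < 1 / Real.sqrt 3) := by
  refine ⟨fun y hy => ?_, phiSym_chernShen _, ?_⟩
  · rw [randersFsym_eq_harmonicSym, randersF_eq_norm_mul b hy, randersF_neg_eq_norm_mul b hy,
      harmonicSym_mul (norm_nonneg y), phiSym_eq_harmonicSym (abs_inner_div_norm_lt_one hb hy)]
  · simp_rw [phiSym_chernShen]
    exact chernShen_pos_iff (norm_nonneg b)
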